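/- arXiv:1305.2386 — 6 statements merged into one kernel-verified Lean document; each statement's English description precedes it below -/
import Mathlib

section
/- The Borda count does not prevent social disappointment: there exists a preference profile (for example, for 3 alternatives a, b, c and 4 voters, where voters 1 and 2 have list (a, b, c) and voters 3 and 4 have list (c, b, a)) in which some alternative that is a Borda winner is ranked last by at least half of the voters. -/
/-!
A ballot and its reverse together give every alternative exactly `m - 1` Borda points, where
`m` is the number of alternatives: the alternatives below it on one list are those above it on
the other. So if half of the voters hold a ballot and the other half its reverse, all
alternatives tie for the Borda win, and the top alternative of the ballot is ranked last by
half of the voters.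
-/

open Finset

attribute [local instance] Classical.propDecidable

noncomputable section

/-- A preference profile for `n` voters: each voter has a ballot, a list of
alternatives ordered from most preferred (head) to least preferred (last). -/
abbrev Profile (n : ℕ) (A : Type*) := Fin n → List A

variable {A : Type*} [DecidableEq A]

/-- A valid profile: every ballot is a strict linear order on the alternatives,
i.e. a duplicate-free list containing every alternative. -/
def IsProfile {n : ℕ} (P : Profile n A) : Prop :=
  ∀ i, (P i).Nodup ∧ ∀ a : A, a ∈ P i

/-- The voter with ballot `l` prefers `x` to `y`. -/
def Prefers (l : List A) (x y : A) : Prop := l.idxOf x < l.idxOf y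

/-- The number of voters who rank `a` last (at the bottom of their list). -/
def lastCount {n : ℕ} (P : Profile n A) (a : A) : ℕ :=
  (univ.filter fun i => (P i).getLast? = some a).card

/-- The number of voters who rank `a` first (at the top of their list). -/
def firstCount {n : ℕ} (P : Profile n A) (a : A) : ℕ :=
  (univ.filter fun i => (P i).head? = some a).card

/-- The number of voters preferring `x` to `y`. -/
def prefCount {n : ℕ} (P : Profile n A) (x y : A) : ℕ :=
  (univ.filter fun i => Prefers (P i) x y).card

/-- `x` defeats `y` in a pairwise majority contest: strictly more voters
prefer `x` to `y` than prefer `y` to `x`. -/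
def Defeats {n : ℕ} (P : Profile n A) (x y : A) : Prop :=
  prefCount P y x < prefCount P x y

/-- Condorcet's method: the winners are the alternatives defeated by no other alternative. -/
def CondorcetWinners {n : ℕ} (P : Profile n A) : Set A :=
  {a | ∀ b, ¬ Defeats P b a}

/-- `a` is a Condorcet winner: it is the unique winner of Condorcet's method. -/
def IsCondorcetWinner {n : ℕ} (P : Profile n A) (a : A) : Prop :=
  CondorcetWinners P = {a}

/-- Borda score of `a`: from each voter, `a` receives one point for every
alternative ranked strictly below it on that voter's list. -/
def bordaScore {n : ℕ} [Fintype A] (P : Profile n A) (a : A) : ℕ :=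
  ∑ i : Fin n, (univ.filter fun x => Prefers (P i) a x).card

/-- Borda count: the winners are the alternative(s) with maximal total Borda score. -/
def BordaWinners {n : ℕ} [Fintype A] (P : Profile n A) : Set A :=
  {a | ∀ b, bordaScore P b ≤ bordaScore P a}

theorem List.Nodup.idxOf_reverse {l : List A} (hl : l.Nodup) {x : A} (hx : x ∈ l) :
    l.reverse.idxOf x = l.length - 1 - l.idxOf x := by
  have hi : l.idxOf x < l.length := List.idxOf_lt_length_of_mem hx
  have hj : l.length - 1 - l.idxOf x < l.reverse.length := by
    rw [List.length_reverse]; omega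
  have hxj : l.reverse[l.length - 1 - l.idxOf x] = x := by
    simp only [List.getElem_reverse, List.getElem_idxOf,
      show l.length - 1 - (l.length - 1 - l.idxOf x) = l.idxOf x by omega]
  conv_lhs => rw [← hxj]
  exact (List.nodup_reverse.2 hl).idxOf_getElem _ hj

theorem prefers_reverse_iff {l : List A} (hl : l.Nodup) {x y : A} (hx : x ∈ l) (hy : y ∈ l) :
    Prefers l.reverse x y ↔ Prefers l y x := by
  have := List.idxOf_lt_length_of_mem hx
  have := List.idxOf_lt_length_of_mem hy
  simp only [Prefers, hl.idxOf_reverse hx, hl.idxOf_reverse hy]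
  omega

theorem prefers_or_prefers_iff_ne {l : List A} {x y : A} (hx : x ∈ l) :
    Prefers l x y ∨ Prefers l y x ↔ x ≠ y := by
  rw [Prefers, Prefers, Ne, ← List.idxOf_inj hx]
  omega

theorem card_prefers_add_card_prefers_reverse [Fintype A] {l : List A} (hl : l.Nodup)
    (hA : ∀ a, a ∈ l) (a : A) :
    #{x | Prefers l a x} + #{x | Prefers l.reverse a x} = Fintype.card A - 1 := by
  have hdisj : Disjoint (univ.filter (Prefers l a)) (univ.filter (Prefers l · a)) :=
    disjoint_filter.2 fun _ _ hax hxa => lt_asymm hax hxa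
  simp only [prefers_reverse_iff hl (hA a) (hA _)]
  rw [← card_union_of_disjoint hdisj, ← filter_or]
  simp only [prefers_or_prefers_iff_ne (hA a), ne_comm (a := a), filter_ne',
    card_erase_of_mem (mem_univ a), card_univ]

def mirrorProfile {α : Type*} (k : ℕ) (l : List α) : Profile (k + k) α :=
  Fin.append (fun _ => l) (fun _ => l.reverse)

theorem isProfile_mirrorProfile {α : Type*} (k : ℕ) {l : List α} (hl : l.Nodup)
    (hα : ∀ a, a ∈ l) : IsProfile (mirrorProfile k l) := by
  refine Fin.addCases (fun _ => ?_) (fun _ => ?_)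
  · rw [mirrorProfile, Fin.append_left]
    exact ⟨hl, hα⟩
  · rw [mirrorProfile, Fin.append_right]
    exact ⟨List.nodup_reverse.2 hl, fun a => List.mem_reverse.2 (hα a)⟩

theorem bordaScore_mirrorProfile [Fintype A] (k : ℕ) {l : List A} (hl : l.Nodup)
    (hA : ∀ a, a ∈ l) (a : A) :
    bordaScore (mirrorProfile k l) a = k * (Fintype.card A - 1) := by
  simp only [bordaScore, mirrorProfile, Fin.sum_univ_add, Fin.append_left, Fin.append_right,
    sum_const, card_univ, Fintype.card_fin, smul_eq_mul, ← mul_add,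
    card_prefers_add_card_prefers_reverse hl hA]

theorem bordaWinners_mirrorProfile [Fintype A] (k : ℕ) {l : List A} (hl : l.Nodup)
    (hA : ∀ a, a ∈ l) : BordaWinners (mirrorProfile k l) = Set.univ :=
  Set.eq_univ_of_forall fun a b => by
    rw [bordaScore_mirrorProfile k hl hA, bordaScore_mirrorProfile k hl hA]

theorem le_lastCount_mirrorProfile (k : ℕ) {l : List A} {a : A} (ha : l.head? = some a) :
    k ≤ lastCount (mirrorProfile k l) a := by
  rw [lastCount, card_filter, Fin.sum_univ_add]
  simp only [mirrorProfile, Fin.append_left, Fin.append_right, List.getLast?_reverse, ha,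
    if_true, sum_const, card_univ, Fintype.card_fin, smul_eq_mul, mul_one]
  exact Nat.le_add_left k _

/-- The Borda count does not prevent social disappointment:
there is a profile (3 alternatives, 4 voters) in which some Borda winner
is ranked last by at least half of the voters. -/
theorem borda_not_nonSD :
    ∃ P : Profile 4 (Fin 3), IsProfile P ∧
      ∃ a ∈ BordaWinners P, 4 ≤ 2 * lastCount P a := by
  have hl : [(0 : Fin 3), 1, 2].Nodup := by decide
  have hA : ∀ a : Fin 3, a ∈ [0, 1, 2] := by decide
  refine ⟨mirrorProfile 2 [0, 1, 2], isProfile_mirrorProfile 2 hl hA, 0, ?_, ?_⟩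
  · rw [bordaWinners_mirrorProfile 2 hl hA]
    exact Set.mem_univ 0
  · have := le_lastCount_mirrorProfile 2 (l := [(0 : Fin 3), 1, 2]) rfl
    omega
end
end

section
/- The Hare system does not prevent social disappointment: there exists a preference profile (for example, for 3 alternatives a, b, c and 10 voters, where 4 voters have list (a, b, c), 3 voters have (c, b, a) and 3 voters have (b, c, a)) in which some alternative that is a Hare winner is ranked last by at least half of the voters. -/
open Finset

attribute [local instance] Classical.propDecidable

noncomputable section

variable {A : Type*} [DecidableEq A]

/-- The top alternative of ballot `l` among the still-remaining alternatives `S`. -/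
def topAmong (S : Finset A) (l : List A) : Option A :=
  (l.filter fun x => decide (x ∈ S)).head?

/-- The number of voters ranking `a` first among the remaining alternatives `S`. -/
def hFirstCount {n : ℕ} (P : Profile n A) (S : Finset A) (a : A) : ℕ :=
  (univ.filter fun i => topAmong S (P i) = some a).card

/-- One round of the Hare system: delete from `S` the alternative(s) with the
fewest first-place rankings, i.e. keep those that are not minimal. -/
def hareStep {n : ℕ} (P : Profile n A) (S : Finset A) : Finset A :=
  S.filter fun a => ∃ b ∈ S, hFirstCount P S b < hFirstCount P S a

/-- Iterating the Hare rounds; once a round would delete every remaining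
alternative, the process stops (those alternatives are the ones deleted last). -/
def hareIter {n : ℕ} [Fintype A] (P : Profile n A) : ℕ → Finset A
  | 0 => Finset.univ
  | k + 1 =>
      let S := hareIter P k
      if hareStep P S = ∅ then S else hareStep P S

/-- Hare system winners: the alternative(s) remaining at the last stage. -/
def HareWinners {n : ℕ} [Fintype A] (P : Profile n A) : Finset A :=
  hareIter P (Fintype.card A)

/-!
With 4 ballots `(0, 1, 2)`, 3 ballots `(2, 1, 0)` and 3 ballots `(1, 2, 0)`, the alternatives
`1` and `2` tie for the fewest first places and are deleted together in the first Hare round,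
so `0` is the only winner although 6 of the 10 voters rank it last.
-/

section Hare

variable {n : ℕ} (P : Profile n A)

theorem hareStep_singleton (a : A) : hareStep P {a} = ∅ := by
  simp [hareStep]

variable [Fintype A]

theorem topAmong_univ (l : List A) : topAmong univ l = l.head? := by
  simp [topAmong]

theorem hFirstCount_univ (a : A) : hFirstCount P univ a = firstCount P a := by
  simp only [hFirstCount, firstCount, topAmong_univ]

theorem hareIter_succ_of_hareStep_eq_empty {k : ℕ} (h : hareStep P (hareIter P k) = ∅) :
    hareIter P (k + 1) = hareIter P k := by
  simp only [hareIter, h, if_true]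

theorem hareIter_succ_of_hareStep_ne_empty {k : ℕ} (h : hareStep P (hareIter P k) ≠ ∅) :
    hareIter P (k + 1) = hareStep P (hareIter P k) := by
  simp only [hareIter, h, if_false]

theorem hareIter_eq_of_hareStep_eq_empty {k m : ℕ} (h : hareStep P (hareIter P k) = ∅)
    (hkm : k ≤ m) : hareIter P m = hareIter P k := by
  induction m, hkm using Nat.le_induction with
  | base => rfl
  | succ m _ ih => rw [hareIter_succ_of_hareStep_eq_empty P (ih ▸ h), ih]

/-- Once a single alternative survives, no further round can delete it. -/
theorem hareWinners_eq_singleton_of_hareStep_univ {a : A} (h : hareStep P univ = {a}) :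
    HareWinners P = {a} := by
  have hone : hareIter P 1 = {a} :=
    (hareIter_succ_of_hareStep_ne_empty P (by simp [hareIter, h])).trans h
  have hcard : 1 ≤ Fintype.card A := Fintype.card_pos_iff.mpr ⟨a⟩
  rw [HareWinners, hareIter_eq_of_hareStep_eq_empty P (hone ▸ hareStep_singleton P a) hcard, hone]

end Hare

def exampleProfile : Profile 10 (Fin 3) := fun i =>
  if i.val < 4 then [0, 1, 2] else if i.val < 7 then [2, 1, 0] else [1, 2, 0]

theorem isProfile_exampleProfile : IsProfile exampleProfile := by
  intro i
  fin_cases i <;> decide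

-- `convert` replaces the classical decidability instances of the definitions by computable ones.
theorem firstCount_exampleProfile (a : Fin 3) : firstCount exampleProfile a = ![4, 3, 3] a := by
  unfold firstCount
  convert (by decide : ∀ a : Fin 3,
    (univ.filter fun i => (exampleProfile i).head? = some a).card = ![4, 3, 3] a) a

theorem lastCount_exampleProfile_zero : lastCount exampleProfile 0 = 6 := by
  unfold lastCount
  convert (by decide : (univ.filter fun i => (exampleProfile i).getLast? = some 0).card = 6)

theorem hareStep_exampleProfile_univ : hareStep exampleProfile univ = {0} := by
  ext a
  simp only [hareStep, hFirstCount_univ, firstCount_exampleProfile, mem_filter, mem_univ,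
    true_and, mem_singleton]
  fin_cases a <;> decide

theorem hareWinners_exampleProfile : HareWinners exampleProfile = {0} :=
  hareWinners_eq_singleton_of_hareStep_univ _ hareStep_exampleProfile_univ

/-- The Hare system does not prevent social disappointment:
there is a profile (3 alternatives, 10 voters) in which some Hare winner
is ranked last by at least half of the voters. -/
theorem hare_not_nonSD :
    ∃ P : Profile 10 (Fin 3), IsProfile P ∧
      ∃ a ∈ HareWinners P, 10 ≤ 2 * lastCount P a :=
  ⟨exampleProfile, isProfile_exampleProfile, 0, by simp [hareWinners_exampleProfile],
    by simp [lastCount_exampleProfile_zero]⟩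
end
end

section
/- Let a profile have an even number 2k of voters (k ≥ 1) over at least two alternatives, suppose exactly k voters rank alternative a last, and suppose all remaining k voters rank a first. Then every pairwise majority contest between a and another alternative is a tie, hence a is among the winners of Condorcet's method; consequently, Condorcet's method produces social disappointment at such a profile (a winning alternative is ranked last by at least half of the voters). -/
open Finset

attribute [local instance] Classical.propDecidable

noncomputable section

variable {A : Type*} [DecidableEq A]

/-!
A voter who ranks `a` first prefers `a` to every other alternative, and one who ranks `a` last
prefers every other alternative to `a`. So when every voter ranks `a` first or last, each
contest between `a` and `b ≠ a` is decided by the `k` voters ranking `a` first against the `k`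
ranking it last: a tie. Hence nothing defeats `a`, and `a` is a winner ranked last by half of
the voters.
-/

theorem Prefers.asymm {l : List A} {x y : A} (h : Prefers l x y) : ¬ Prefers l y x :=
  lt_asymm h

theorem prefers_or_prefers {l : List A} {x y : A} (hx : x ∈ l) (hxy : x ≠ y) :
    Prefers l x y ∨ Prefers l y x :=
  lt_or_gt_of_ne fun h => hxy ((List.idxOf_inj hx).mp h)

theorem prefers_of_head?_eq {l : List A} {a b : A} (ha : l.head? = some a) (hba : b ≠ a) :
    Prefers l a b := by
  obtain ⟨l', rfl⟩ := List.head?_eq_some_iff.mp ha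
  simp [Prefers, List.idxOf_cons_ne _ hba.symm]

theorem prefers_of_getLast?_eq {l : List A} (hl : l.Nodup) {a b : A}
    (ha : l.getLast? = some a) (hb : b ∈ l) (hba : b ≠ a) : Prefers l b a := by
  obtain ⟨l', rfl⟩ := List.getLast?_eq_some_iff.mp ha
  have ha' : a ∉ l' := fun h =>
    (List.nodup_append.mp hl).2.2 a h a (List.mem_singleton_self a) rfl
  have hb' : b ∈ l' := by simpa [hba] using hb
  unfold Prefers
  rw [List.idxOf_append_of_mem hb', List.idxOf_append_of_notMem ha', List.idxOf_cons_self]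
  exact List.idxOf_lt_length_of_mem hb'

section Profile

variable {n : ℕ} {P : Profile n A}

theorem prefCount_add_prefCount (hP : IsProfile P) {a b : A} (hab : a ≠ b) :
    prefCount P a b + prefCount P b a = n := by
  have hsplit : (univ.filter fun i => Prefers (P i) b a)
      = univ.filter fun i => ¬ Prefers (P i) a b := by
    refine filter_congr fun i _ => ⟨Prefers.asymm, fun h => ?_⟩
    exact (prefers_or_prefers ((hP i).2 a) hab).resolve_left h
  rw [prefCount, prefCount, hsplit, card_filter_add_card_filter_not, card_univ,
    Fintype.card_fin]

theorem prefCount_eq_lastCount (hP : IsProfile P) {a : A}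
    (hpolar : ∀ i, (P i).getLast? ≠ some a → (P i).head? = some a) {b : A} (hba : b ≠ a) :
    prefCount P b a = lastCount P a := by
  refine congrArg card (filter_congr fun i _ => ⟨fun h => ?_, fun h => ?_⟩)
  · by_contra hlast
    exact h.asymm (prefers_of_head?_eq (hpolar i hlast) hba)
  · exact prefers_of_getLast?_eq (hP i).1 h ((hP i).2 b) hba

theorem mem_condorcetWinners_of_forall_prefCount_le {a : A}
    (h : ∀ b, b ≠ a → prefCount P b a ≤ prefCount P a b) : a ∈ CondorcetWinners P := by
  intro b hb
  rcases eq_or_ne b a with rfl | hba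
  · exact lt_irrefl _ hb
  · exact (h b hba).not_gt hb

end Profile

theorem half_last_half_first_ties_general {A : Type*} [DecidableEq A] {k : ℕ}
    (P : Profile (2 * k) A) (hP : IsProfile P)
    (a : A) (hlast : lastCount P a = k)
    (hfirst : ∀ i, (P i).getLast? ≠ some a → (P i).head? = some a) :
    (∀ b, b ≠ a → prefCount P a b = prefCount P b a) ∧
    a ∈ CondorcetWinners P ∧
    ∃ w ∈ CondorcetWinners P, 2 * k ≤ 2 * lastCount P w := by
  have hties : ∀ b, b ≠ a → prefCount P a b = prefCount P b a := by
    intro b hba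
    have hsum := prefCount_add_prefCount hP hba.symm
    have hagainst := prefCount_eq_lastCount hP hfirst hba
    omega
  have hwin : a ∈ CondorcetWinners P :=
    mem_condorcetWinners_of_forall_prefCount_le fun b hba => (hties b hba).ge
  exact ⟨hties, hwin, a, hwin, by rw [hlast]⟩

/-- with `2k` voters (`k ≥ 1`), if exactly `k` voters rank `a` last
and all remaining `k` voters rank `a` first, then every pairwise contest between
`a` and another alternative is a tie, hence `a` is among the winners of
Condorcet's method; consequently Condorcet's method produces social
disappointment at such a profile. -/
theorem half_last_half_first_ties {A : Type*} [Fintype A] [DecidableEq A]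
    (hA : 2 ≤ Fintype.card A) {k : ℕ} (hk : 1 ≤ k)
    (P : Profile (2 * k) A) (hP : IsProfile P)
    (a : A) (hlast : lastCount P a = k)
    (hfirst : ∀ i, (P i).getLast? ≠ some a → (P i).head? = some a) :
    (∀ b, b ≠ a → prefCount P a b = prefCount P b a) ∧
    a ∈ CondorcetWinners P ∧
    ∃ w ∈ CondorcetWinners P, 2 * k ≤ 2 * lastCount P w :=
  half_last_half_first_ties_general P hP a hlast hfirst
end
end

section
/- There is no social choice procedure on the preference profiles for 4 alternatives and 6 voters that satisfies both nonexistence of social disappointment and the Condorcet winner criterion. (In particular, at the profile whose six lists are (d,a,b,c), (d,a,b,c), (d,c,a,b), (c,a,b,d), (b,c,a,d), (b,c,a,d), alternative d is the Condorcet winner but is ranked last by half of the voters.) -/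
open Finset

attribute [local instance] Classical.propDecidable

noncomputable section

variable {A : Type*} [DecidableEq A]

/-! At the profile `(d,a,b,c), (d,a,b,c), (d,c,a,b), (c,a,b,d), (b,c,a,d), (b,c,a,d)` the
alternative `d` ties 3–3 with each of `a`, `b`, `c`, which form a majority cycle
(`a` beats `b`, `b` beats `c`, `c` beats `a`, each 4–2). So `d` is the Condorcet winner and
the Condorcet winner criterion forces it to be the sole winner, although half of the voters
rank it last. -/

section Procedures

variable {n : ℕ}

def NoSocialDisappointment (V : Profile n A → Set A) : Prop :=
  ∀ P, IsProfile P → ∀ a ∈ V P, 2 * lastCount P a < n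

def CondorcetWinnerCriterion (V : Profile n A → Set A) : Prop :=
  ∀ P, IsProfile P → ∀ a : A, IsCondorcetWinner P a → V P = {a}

theorem isCondorcetWinner_iff {P : Profile n A} {a : A} :
    IsCondorcetWinner P a ↔ (∀ b, ¬ Defeats P b a) ∧ ∀ b ≠ a, ∃ c, Defeats P c b := by
  simp only [IsCondorcetWinner, Set.eq_singleton_iff_unique_mem, CondorcetWinners,
    Set.mem_ofPred_eq]
  refine and_congr_right fun _ => forall_congr' fun b => ?_
  rw [← not_imp_not]
  push Not
  rfl

theorem defeats_iff {P : Profile n A} {x y : A} :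
    Defeats P x y ↔
      #{i | (P i).idxOf y < (P i).idxOf x} < #{i | (P i).idxOf x < (P i).idxOf y} := by
  unfold Defeats prefCount Prefers
  convert Iff.rfl

theorem not_noSocialDisappointment_of_disappointing_condorcetWinner {P : Profile n A}
    (hP : IsProfile P) {a : A} (ha : IsCondorcetWinner P a) (hlast : n ≤ 2 * lastCount P a)
    {V : Profile n A → Set A} (hV : CondorcetWinnerCriterion V) : ¬ NoSocialDisappointment V :=
  fun hSD => (hSD P hP a (by rw [hV P hP a ha]; rfl)).not_ge hlast

end Procedures

-- The alternatives `a`, `b`, `c`, `d` are `0`, `1`, `2`, `3`.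
def disappointingProfile : Profile 6 (Fin 4) :=
  ![[3, 0, 1, 2], [3, 0, 1, 2], [3, 2, 0, 1], [2, 0, 1, 3], [1, 2, 0, 3], [1, 2, 0, 3]]

theorem isProfile_disappointingProfile : IsProfile disappointingProfile := by
  unfold IsProfile
  decide

theorem isCondorcetWinner_disappointingProfile : IsCondorcetWinner disappointingProfile 3 := by
  simp only [isCondorcetWinner_iff, defeats_iff]
  decide

theorem lastCount_disappointingProfile : lastCount disappointingProfile 3 = 3 := by
  decide

/-- there is no social choice procedure on the preference profiles
for 4 alternatives and 6 voters satisfying both nonexistence of social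
disappointment and the Condorcet winner criterion. -/
theorem no_nonSD_and_CWC :
    ¬ ∃ V : Profile 6 (Fin 4) → Set (Fin 4),
        (∀ P, IsProfile P → ∀ a ∈ V P, 2 * lastCount P a < 6) ∧
        (∀ P, IsProfile P → ∀ a : Fin 4, IsCondorcetWinner P a → V P = {a}) := by
  rintro ⟨V, hSD, hCWC⟩
  exact not_noSocialDisappointment_of_disappointing_condorcetWinner isProfile_disappointingProfile
    isCondorcetWinner_disappointingProfile (by rw [lastCount_disappointingProfile]) hCWC hSD
end
end

section
/- The Condorcet-with-amendment procedure does not satisfy the always-a-winner condition nor the Condorcet winner criterion: there exists a preference profile for 4 alternatives and 6 voters (with lists (d,a,b,c), (d,a,b,c), (d,c,a,b), (c,a,b,d), (b,c,a,d), (b,c,a,d)) that has a Condorcet winner but at which the Condorcet-with-amendment procedure produces the empty set of winners. -/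
open Finset

attribute [local instance] Classical.propDecidable

noncomputable section

variable {A : Type*} [DecidableEq A]

/-- Condorcet's method with an amendment: remove from the Condorcet winners every
alternative ranked last by at least half of the voters. -/
def CondorcetAmended {n : ℕ} (P : Profile n A) : Set A :=
  {a ∈ CondorcetWinners P | 2 * lastCount P a < n}

/-!
Among `a`, `b`, `c` the majorities form a cycle, `a` over `b`, `b` over `c`, `c` over `a`, each by
four votes to two, so none of them is a Condorcet winner. The alternative `d` is first for three voters
and last for the other three, so it ties with every alternative and is the Condorcet winner; being
ranked last by exactly half of the voters, it is then removed by the amendment.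
-/

-- `prefCount` filters through the classical instance for `Prefers`; this form is decidable.
theorem prefCount_eq_card_idxOf_lt {n : ℕ} (P : Profile n A) (x y : A) :
    prefCount P x y = #{i | (P i).idxOf x < (P i).idxOf y} := by
  unfold prefCount Prefers
  congr

theorem isCondorcetWinner_of_defeated {n : ℕ} {P : Profile n A} {a : A}
    (hundefeated : ∀ b, ¬ Defeats P b a) (hdefeated : ∀ b ≠ a, ∃ c, Defeats P c b) :
    IsCondorcetWinner P a := by
  ext b
  refine ⟨fun hb => ?_, fun hb => hb ▸ hundefeated⟩
  by_contra hba
  obtain ⟨c, hcb⟩ := hdefeated b hba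
  exact hb c hcb

theorem condorcetAmended_eq_empty_of_isCondorcetWinner {n : ℕ} {P : Profile n A} {a : A}
    (ha : IsCondorcetWinner P a) (hlast : n ≤ 2 * lastCount P a) : CondorcetAmended P = ∅ := by
  refine Set.eq_empty_of_forall_notMem fun b ⟨hb, hlt⟩ => ?_
  rw [ha, Set.mem_singleton_iff] at hb
  subst hb
  omega

/-- The voters' lists `(d,a,b,c)`, `(d,a,b,c)`, `(d,c,a,b)`, `(c,a,b,d)`, `(b,c,a,d)`, `(b,c,a,d)`,
with the alternatives `a, b, c, d` numbered `0, 1, 2, 3`. -/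
def cyclicProfile : Profile 6 (Fin 4) :=
  ![[3, 0, 1, 2], [3, 0, 1, 2], [3, 2, 0, 1], [2, 0, 1, 3], [1, 2, 0, 3], [1, 2, 0, 3]]

theorem isProfile_cyclicProfile : IsProfile cyclicProfile := by
  unfold IsProfile
  decide

theorem not_defeats_cyclicProfile_three (b : Fin 4) : ¬ Defeats cyclicProfile b 3 := by
  revert b
  simp only [Defeats, prefCount_eq_card_idxOf_lt]
  decide

theorem exists_defeats_cyclicProfile (b : Fin 4) (hb : b ≠ 3) : ∃ c, Defeats cyclicProfile c b := by
  revert b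
  simp only [Defeats, prefCount_eq_card_idxOf_lt]
  decide

theorem lastCount_cyclicProfile_three : lastCount cyclicProfile 3 = 3 := by
  unfold lastCount
  decide

/-- the Condorcet-with-amendment procedure satisfies neither
always-a-winner nor the Condorcet winner criterion: there is a profile
(4 alternatives, 6 voters) that has a Condorcet winner but at which the
Condorcet-with-amendment procedure produces no winner at all. -/
theorem condorcetAmended_not_AAW_not_CWC :
    ∃ P : Profile 6 (Fin 4), IsProfile P ∧
      (∃ a : Fin 4, IsCondorcetWinner P a) ∧ CondorcetAmended P = ∅ := by
  have hwinner : IsCondorcetWinner cyclicProfile 3 :=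
    isCondorcetWinner_of_defeated not_defeats_cyclicProfile_three exists_defeats_cyclicProfile
  refine ⟨cyclicProfile, isProfile_cyclicProfile, ⟨3, hwinner⟩, ?_⟩
  exact condorcetAmended_eq_empty_of_isCondorcetWinner hwinner (by rw [lastCount_cyclicProfile_three])
end
end

section
/- For any fixed number of voters, there exists a social choice procedure on the preference profiles for exactly 3 alternatives that simultaneously satisfies the always-a-winner condition, the Condorcet winner criterion, and nonexistence of social disappointment. (This contrasts with the impossibility for four or more alternatives.) -/
open Finset

attribute [local instance] Classical.propDecidable

noncomputable section

variable {A : Type*} [DecidableEq A]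

/-!
A Condorcet winner `a` among three alternatives beats one of the other two, `b` say: otherwise
each of the other two would be defeated by the remaining third one, and they would defeat each
other. Since every voter ranking `a` last prefers `b` to `a`, fewer than half of the voters rank
`a` last. When there is no Condorcet winner, declaring the winners to be the alternatives ranked
last by fewer than half of the voters never leaves the winner set empty, because the last-place
counts of at least three alternatives add up to at most `n`.
-/

namespace Prefers

theorem not_iff {l : List A} {a b : A} (ha : a ∈ l) (hab : a ≠ b) :
    ¬ Prefers l a b ↔ Prefers l b a := by
  have hne : l.idxOf a ≠ l.idxOf b := fun h => hab ((List.idxOf_inj ha).1 h)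
  unfold Prefers
  omega

theorem of_getLast?_eq {l : List A} (hl : l.Nodup) {a b : A} (ha : l.getLast? = some a)
    (hb : b ∈ l) (hba : b ≠ a) : Prefers l b a := by
  obtain ⟨ys, rfl⟩ := List.getLast?_eq_some_iff.1 ha
  have hay : a ∉ ys := fun h => List.disjoint_of_nodup_append hl h (List.mem_singleton_self a)
  have hby : b ∈ ys := by simpa [hba] using hb
  simp only [Prefers, List.idxOf_append_of_mem hby, List.idxOf_append_of_notMem hay]
  simpa using List.idxOf_lt_length_iff.2 hby

end Prefers

variable {n : ℕ} {P : Profile n A}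

theorem lastCount_le_prefCount (hP : IsProfile P) {a b : A} (hba : b ≠ a) :
    lastCount P a ≤ prefCount P b a :=
  card_le_card fun i hi => by
    simp only [mem_filter, mem_univ, true_and] at hi ⊢
    exact Prefers.of_getLast?_eq (hP i).1 hi ((hP i).2 b) hba

theorem Defeats.irrefl (a : A) : ¬ Defeats P a a := lt_irrefl _

theorem Defeats.asymm {a b : A} (h : Defeats P a b) : ¬ Defeats P b a := lt_asymm h

theorem Defeats.two_mul_lastCount_lt (hP : IsProfile P) {a b : A} (h : Defeats P a b) :
    2 * lastCount P a < n := by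
  have hba : b ≠ a := by rintro rfl; exact Defeats.irrefl b h
  have hlast := lastCount_le_prefCount hP hba
  have htotal := prefCount_add_prefCount hP hba.symm
  unfold Defeats at h
  omega

theorem sum_lastCount_le [Fintype A] (P : Profile n A) : ∑ a, lastCount P a ≤ n := by
  have hfib := card_eq_sum_card_fiberwise (s := univ) (t := univ)
    (f := fun i => (P i).getLast?) (fun _ _ => mem_coe.2 (mem_univ _))
  rw [Fintype.sum_option, card_univ, Fintype.card_fin] at hfib
  unfold lastCount
  omega

theorem exists_two_mul_lastCount_lt [Fintype A] (hA : 3 ≤ Fintype.card A) (hn : 0 < n)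
    (P : Profile n A) : ∃ a, 2 * lastCount P a < n := by
  by_contra! hall
  have : Fintype.card A * n ≤ 2 * n :=
    calc Fintype.card A * n = ∑ _a : A, n := by simp
      _ ≤ ∑ a, 2 * lastCount P a := sum_le_sum fun a _ => hall a
      _ = 2 * ∑ a, lastCount P a := (mul_sum ..).symm
      _ ≤ 2 * n := Nat.mul_le_mul_left 2 (sum_lastCount_le P)
  nlinarith

theorem IsCondorcetWinner.exists_defeats {P : Profile n (Fin 3)} {a : Fin 3}
    (h : IsCondorcetWinner P a) : ∃ b, Defeats P a b := by
  have beaten : ∀ x ≠ a, ∃ d, Defeats P d x := fun x hx => by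
    by_contra! hx'
    exact hx (Set.eq_of_mem_singleton (h ▸ show x ∈ CondorcetWinners P from hx'))
  by_contra! hna
  obtain ⟨d, hd⟩ := beaten (a + 1) (by omega)
  have hda : d ≠ a := by rintro rfl; exact hna _ hd
  have hdx : d ≠ a + 1 := by rintro rfl; exact Defeats.irrefl _ hd
  obtain ⟨e, he⟩ := beaten d hda
  have hea : e ≠ a := by rintro rfl; exact hna _ he
  have hed : e ≠ d := by rintro rfl; exact Defeats.irrefl _ he
  obtain rfl : e = a + 1 := by omega
  exact he.asymm hd

def condorcetElseRarelyLast (P : Profile n A) : Set A :=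
  if ∃ a, IsCondorcetWinner P a then CondorcetWinners P else {a | 2 * lastCount P a < n}

/-- for any (positive) number of voters there is a social choice
procedure for exactly 3 alternatives that satisfies always-a-winner, the
Condorcet winner criterion, and nonexistence of social disappointment. -/
theorem exists_AAW_CWC_nonSD_three_alts (n : ℕ) (hn : 0 < n) :
    ∃ V : Profile n (Fin 3) → Set (Fin 3),
      (∀ P, IsProfile P → (V P).Nonempty) ∧
      (∀ P, IsProfile P → ∀ a : Fin 3, IsCondorcetWinner P a → V P = {a}) ∧
      (∀ P, IsProfile P → ∀ a ∈ V P, 2 * lastCount P a < n) := by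
  refine ⟨condorcetElseRarelyLast, fun P _ => ?_, fun P _ a ha => ?_, fun P hP a ha => ?_⟩
  · by_cases h : ∃ a, IsCondorcetWinner P a
    · obtain ⟨a, ha⟩ := h
      rw [condorcetElseRarelyLast, if_pos ⟨a, ha⟩, ha]
      exact Set.singleton_nonempty a
    · rw [condorcetElseRarelyLast, if_neg h]
      exact exists_two_mul_lastCount_lt (by simp) hn P
  · rw [condorcetElseRarelyLast, if_pos ⟨a, ha⟩, ha]
  · by_cases h : ∃ a, IsCondorcetWinner P a
    · obtain ⟨c, hc⟩ := h
      rw [condorcetElseRarelyLast, if_pos ⟨c, hc⟩, hc, Set.mem_singleton_iff] at ha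
      obtain ⟨b, hb⟩ := (ha ▸ hc).exists_defeats
      exact hb.two_mul_lastCount_lt hP
    · rwa [condorcetElseRarelyLast, if_neg h] at ha
end
end
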